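/- Let k ≥ 3, r ≥ 1, and α be integers with 0 ≤ α ≤ rk − 1, and let m ∈ [1, k] be the integer with (m−1)r ≤ α < mr. Let A be a set of k distinct integers with 0 ∉ A, and let 𝒜 be the multiset consisting of each element of A with multiplicity exactly r. Then |Σ_α(𝒜)| ≥ r(⌊(k+1)²/4⌋ − m(m+1)/2) + 1; equivalently, |Σ_α(𝒜)| ≥ r((k+1)²/4 − m(m+1)/2) + 1 if k is odd and |Σ_α(𝒜)| ≥ r(((k+1)²−1)/4 − m(m+1)/2) + 1 if k is even. -/

import Mathlib

/-- `sigmaSeqAtLeast A r α` is the set of all subsequence sums of the multiset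
consisting of each element of `A` with multiplicity `r`, coming from
submultisets with at least `α` terms. -/
def sigmaSeqAtLeast (A : Finset ℤ) (r α : ℕ) : Finset ℤ :=
  (((r • A.val).powerset.filter (fun B => α ≤ Multiset.card B)).map
    Multiset.sum).toFinset

/-!
Passing to complements inside `𝒜`, it suffices to count the sums of at most `γ = rk - α` terms.
Split `A` into its `p` positive and `n` negative elements: their sums are `≥ 0` and `≤ 0`
respectively, so the two counts add up, up to the common value `0`.

For `p` positive integers with largest element `a`, the sums of at most `r` terms already take
`rp + 1` values in `[0, ra]` (a chain of `r` new values for each element), and `ra` plus a positive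
sum of at most `γ - r` of the remaining elements gives further values above `ra`. By induction this
yields `r * C(d + 1, 2) + 1` values as soon as `d ≤ p` and `rd ≤ γ`. With `d = k - m` we have
`rd ≤ γ`, and the inequality `C(a + 1, 2) + C(b + 1, 2) ≥ ⌊(k + 1)² / 4⌋` for `a + b = k`
(applied to `(p, n)` or to `(d, m)`) finishes the proof.
-/

open Finset

def sumsAtMost (s : Multiset ℤ) (γ : ℕ) : Finset ℤ :=
  ((s.powerset.filter (fun B => Multiset.card B ≤ γ)).map Multiset.sum).toFinset

section sumsAtMost

variable {s t : Multiset ℤ} {γ δ : ℕ} {x y : ℤ}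

theorem mem_sumsAtMost : x ∈ sumsAtMost s γ ↔ ∃ B ≤ s, Multiset.card B ≤ γ ∧ B.sum = x := by
  simp [sumsAtMost, and_assoc]

theorem zero_mem_sumsAtMost (s : Multiset ℤ) (γ : ℕ) : 0 ∈ sumsAtMost s γ :=
  mem_sumsAtMost.2 ⟨0, Multiset.zero_le s, by simp, Multiset.sum_zero⟩

theorem add_mem_sumsAtMost (hx : x ∈ sumsAtMost s γ) (hy : y ∈ sumsAtMost t δ) :
    x + y ∈ sumsAtMost (s + t) (γ + δ) := by
  obtain ⟨B, hBs, hB, rfl⟩ := mem_sumsAtMost.1 hx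
  obtain ⟨C, hCt, hC, rfl⟩ := mem_sumsAtMost.1 hy
  exact mem_sumsAtMost.2
    ⟨B + C, add_le_add hBs hCt, by simpa using add_le_add hB hC, Multiset.sum_add B C⟩

theorem sumsAtMost_mono (hst : s ≤ t) (hγδ : γ ≤ δ) : sumsAtMost s γ ⊆ sumsAtMost t δ :=
  fun _ hx ↦ by
    obtain ⟨B, hBs, hB, rfl⟩ := mem_sumsAtMost.1 hx
    exact mem_sumsAtMost.2 ⟨B, hBs.trans hst, hB.trans hγδ, rfl⟩

theorem mul_mem_sumsAtMost_nsmul {u : ℤ} (hu : u ∈ s) {c r : ℕ} (hcr : c ≤ r) :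
    (c : ℤ) * u ∈ sumsAtMost (r • s) c := by
  refine mem_sumsAtMost.2 ⟨Multiset.replicate c u, ?_, by simp, by simp⟩
  calc Multiset.replicate c u ≤ r • {u} := by
        rw [Multiset.nsmul_singleton]; exact (Multiset.replicate_le_replicate u).2 hcr
    _ ≤ r • s := nsmul_le_nsmul_right (Multiset.singleton_le.2 hu) r

theorem le_mul_of_mem_sumsAtMost {b : ℤ} (hb : 0 ≤ b) (hs : ∀ x ∈ s, x ≤ b)
    (hy : y ∈ sumsAtMost s γ) : y ≤ γ * b := by
  obtain ⟨B, hBs, hB, rfl⟩ := mem_sumsAtMost.1 hy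
  calc B.sum ≤ Multiset.card B • b :=
        Multiset.sum_le_card_nsmul B b fun x hx ↦ hs x (Multiset.mem_of_le hBs hx)
    _ ≤ γ * b := by rw [nsmul_eq_mul]; exact mul_le_mul_of_nonneg_right (by exact_mod_cast hB) hb

theorem nonneg_of_mem_sumsAtMost (hs : ∀ x ∈ s, 0 ≤ x) (hy : y ∈ sumsAtMost s γ) : 0 ≤ y := by
  obtain ⟨B, hBs, -, rfl⟩ := mem_sumsAtMost.1 hy
  exact Multiset.sum_nonneg fun x hx ↦ hs x (Multiset.mem_of_le hBs hx)

theorem card_sumsAtMost_le_card_sumsAtMost_map_neg :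
    (sumsAtMost s γ).card ≤ (sumsAtMost (s.map Neg.neg) γ).card := by
  refine card_le_card_of_injOn Neg.neg (fun x hx ↦ ?_) neg_injective.injOn
  obtain ⟨B, hBs, hB, rfl⟩ := mem_sumsAtMost.1 hx
  exact mem_sumsAtMost.2 ⟨B.map Neg.neg, Multiset.map_le_map hBs, by simpa using hB,
    Multiset.sum_map_neg' B⟩

end sumsAtMost

theorem mem_sigmaSeqAtLeast {A : Finset ℤ} {r α : ℕ} {x : ℤ} :
    x ∈ sigmaSeqAtLeast A r α ↔ ∃ B ≤ r • A.val, α ≤ Multiset.card B ∧ B.sum = x := by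
  simp [sigmaSeqAtLeast, and_assoc]

-- complementation `B ↦ r • A - B` turns few-term sums into many-term sums
theorem card_sumsAtMost_le_card_sigmaSeqAtLeast (A : Finset ℤ) {r α : ℕ}
    (hα : α ≤ r * A.card) :
    (sumsAtMost (r • A.val) (r * A.card - α)).card ≤ (sigmaSeqAtLeast A r α).card := by
  refine card_le_card_of_injOn ((r • A.val).sum - ·) (fun x hx ↦ ?_)
    (sub_right_injective.injOn)
  obtain ⟨B, hB, hBcard, rfl⟩ := mem_sumsAtMost.1 hx
  refine mem_sigmaSeqAtLeast.2 ⟨r • A.val - B, tsub_le_self, ?_, ?_⟩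
  · rw [Multiset.card_sub hB, Multiset.card_nsmul, card_val]
    omega
  · rw [eq_sub_iff_add_eq, ← Multiset.sum_add, tsub_add_cancel_of_le hB]

theorem nsmul_val_insert {a : ℤ} {s : Finset ℤ} (ha : a ∉ s) (r : ℕ) :
    r • (insert a s).val = r • {a} + r • s.val := by
  rw [insert_val_of_notMem ha, ← Multiset.singleton_add, smul_add]

theorem mul_card_add_one_le_card_sumsAtMost {s : Finset ℤ} (hs : ∀ x ∈ s, 0 < x) {w r : ℕ}
    (hwr : w ≤ r) : w * s.card + 1 ≤ (sumsAtMost (r • s.val) w).card := by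
  induction s using Finset.induction_on_max with
  | empty => simpa using card_pos.2 ⟨0, zero_mem_sumsAtMost _ _⟩
  | insert a s ha ih =>
    have haS : a ∉ s := fun h ↦ lt_irrefl a (ha a h)
    have ha0 : 0 < a := hs a (mem_insert_self a s)
    set u := (insert 0 s).max' ⟨0, mem_insert_self 0 s⟩
    have hu_mem : u = 0 ∨ u ∈ s := mem_insert.1 (max'_mem _ _)
    have hu0 : 0 ≤ u := le_max' _ 0 (mem_insert_self 0 s)
    have hsu : ∀ x ∈ s, x ≤ u := fun x hx ↦ le_max' _ x (mem_insert_of_mem hx)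
    have hua : u < a := hu_mem.elim (fun h ↦ h ▸ ha0) (ha u)
    set X := sumsAtMost (r • s.val) w
    -- the chain `(w - c) u + c a`, `1 ≤ c ≤ w`, climbs from `w u` (the largest possible
    -- element of `X`) to `w a` in steps of `a - u`
    set chain : ℕ → ℤ := fun c ↦ w * u + c * (a - u)
    have hchain_mono : StrictMono chain := fun c c' h ↦ by
      have : (c : ℤ) < c' := by exact_mod_cast h
      simp only [chain]; nlinarith
    have hX : ∀ y ∈ X, y ≤ w * u := fun y hy ↦
      le_mul_of_mem_sumsAtMost hu0 (fun x hx ↦ hsu x (Multiset.mem_of_mem_nsmul hx)) hy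
    have hchain_mem : ∀ c ∈ Icc 1 w, chain c ∈ sumsAtMost (r • (insert a s).val) w := by
      intro c hc
      have hcw : c ≤ w := (mem_Icc.1 hc).2
      have hu : ((w - c : ℕ) : ℤ) * u ∈ sumsAtMost (r • s.val) (w - c) := by
        rcases hu_mem with hu | hu
        · rw [hu, mul_zero]; exact zero_mem_sumsAtMost _ _
        · exact mul_mem_sumsAtMost_nsmul hu (by omega)
      have := add_mem_sumsAtMost (mul_mem_sumsAtMost_nsmul (Multiset.mem_singleton_self a)
        (hcw.trans hwr)) hu
      rw [Nat.add_sub_cancel' hcw, ← nsmul_val_insert haS, Nat.cast_sub hcw] at this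
      convert this using 1
      ring
    have hdisj : Disjoint X ((Icc 1 w).image chain) := by
      refine disjoint_left.2 fun y hyX hy ↦ ?_
      obtain ⟨c, hc, rfl⟩ := mem_image.1 hy
      have : (1 : ℤ) ≤ c := by exact_mod_cast (mem_Icc.1 hc).1
      have := hX _ hyX
      simp only [chain] at this; nlinarith
    calc w * (insert a s).card + 1 = (w * s.card + 1) + w := by
          rw [card_insert_of_notMem haS]; ring
      _ ≤ X.card + ((Icc 1 w).image chain).card := by
          rw [card_image_of_injective _ hchain_mono.injective, Nat.card_Icc]
          exact add_le_add (ih fun x hx ↦ hs x (mem_insert_of_mem hx)) (by omega)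
      _ = (X ∪ (Icc 1 w).image chain).card := (card_union_of_disjoint hdisj).symm
      _ ≤ _ := card_le_card <| union_subset
          (sumsAtMost_mono (by rw [nsmul_val_insert haS]; exact Multiset.le_add_left _ _) le_rfl)
          (image_subset_iff.2 hchain_mem)

theorem mul_choose_add_one_le_card_sumsAtMost {s : Finset ℤ} (hs : ∀ x ∈ s, 0 < x) {r d γ : ℕ}
    (hd : d ≤ s.card) (hγ : r * d ≤ γ) :
    r * (d + 1).choose 2 + 1 ≤ (sumsAtMost (r • s.val) γ).card := by
  induction s using Finset.induction_on_max generalizing d γ with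
  | empty => simpa [Nat.le_zero.1 hd] using card_pos.2 ⟨0, zero_mem_sumsAtMost _ _⟩
  | insert a s ha ih =>
    obtain _ | e := d
    · simpa using card_pos.2 ⟨0, zero_mem_sumsAtMost _ _⟩
    have haS : a ∉ s := fun h ↦ lt_irrefl a (ha a h)
    have ha0 : 0 < a := hs a (mem_insert_self a s)
    have hrγ : r ≤ γ := le_trans (Nat.le_mul_of_pos_right r e.succ_pos) hγ
    rw [card_insert_of_notMem haS] at hd
    -- sums of at most `r` terms lie in `[0, r a]`; on top of the full block `r • {a}`
    -- sit the positive sums of at most `γ - r` terms of the smaller set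
    set X := sumsAtMost (r • (insert a s).val) r
    set Z := sumsAtMost (r • s.val) (γ - r)
    have hX : r * (s.card + 1) + 1 ≤ X.card := by
      have := mul_card_add_one_le_card_sumsAtMost hs (le_refl r)
      rwa [card_insert_of_notMem haS] at this
    have hZ : r * (e + 1).choose 2 + 1 ≤ Z.card :=
      ih (fun x hx ↦ hs x (mem_insert_of_mem hx)) (by omega) (by rw [Nat.mul_succ] at hγ; omega)
    have hXle : ∀ y ∈ X, y ≤ r * a := fun y hy ↦
      le_mul_of_mem_sumsAtMost ha0.le (fun x hx ↦ by
        rcases mem_insert.1 (Multiset.mem_of_mem_nsmul hx) with rfl | hx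
        exacts [le_rfl, (ha x hx).le]) hy
    have hZpos : ∀ z ∈ Z.erase 0, 0 < z := fun z hz ↦
      lt_of_le_of_ne (nonneg_of_mem_sumsAtMost (fun x hx ↦
        (hs x (mem_insert_of_mem (Multiset.mem_of_mem_nsmul hx))).le) (mem_of_mem_erase hz))
        (ne_of_mem_erase hz).symm
    have hdisj : Disjoint X ((Z.erase 0).image (r * a + ·)) := by
      refine disjoint_left.2 fun y hyX hy ↦ ?_
      obtain ⟨z, hz, rfl⟩ := mem_image.1 hy
      linarith [hXle _ hyX, hZpos z hz]
    have hshift : ∀ z ∈ Z.erase 0, r * a + z ∈ sumsAtMost (r • (insert a s).val) γ := by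
      intro z hz
      have := add_mem_sumsAtMost (mul_mem_sumsAtMost_nsmul (Multiset.mem_singleton_self a)
        (le_refl r)) (mem_of_mem_erase hz)
      rwa [Nat.add_sub_cancel' hrγ, ← nsmul_val_insert haS] at this
    calc r * (e + 1 + 1).choose 2 + 1 = r * (e + 1) + 1 + r * (e + 1).choose 2 := by
          rw [Nat.choose_succ_succ', Nat.choose_one_right]; ring
      _ ≤ X.card + (Z.card - 1) := by
          have : r * (e + 1) ≤ r * (s.card + 1) := Nat.mul_le_mul_left r (by omega)
          omega
      _ = X.card + ((Z.erase 0).image (r * a + ·)).card := by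
          rw [card_image_of_injective _ (add_right_injective _),
            card_erase_of_mem (zero_mem_sumsAtMost _ _)]
      _ = (X ∪ (Z.erase 0).image (r * a + ·)).card := (card_union_of_disjoint hdisj).symm
      _ ≤ _ := card_le_card <| union_subset (sumsAtMost_mono le_rfl hrγ)
          (image_subset_iff.2 hshift)

theorem card_sumsAtMost_map_neg (s : Multiset ℤ) (γ : ℕ) :
    (sumsAtMost (s.map Neg.neg) γ).card = (sumsAtMost s γ).card := by
  refine le_antisymm ?_ card_sumsAtMost_le_card_sumsAtMost_map_neg
  simpa [Multiset.map_map] using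
    card_sumsAtMost_le_card_sumsAtMost_map_neg (s := s.map Neg.neg) (γ := γ)

theorem mul_choose_add_one_le_card_sumsAtMost_of_neg {s : Finset ℤ} (hs : ∀ x ∈ s, x < 0)
    {r d γ : ℕ} (hd : d ≤ s.card) (hγ : r * d ≤ γ) :
    r * (d + 1).choose 2 + 1 ≤ (sumsAtMost (r • s.val) γ).card := by
  have := mul_choose_add_one_le_card_sumsAtMost (s := s.map (Equiv.neg ℤ).toEmbedding)
    (by simpa using fun x (hx : -x ∈ s) ↦ neg_lt_zero.1 (hs _ hx)) (by simpa using hd) hγ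
  rwa [map_val, Equiv.coe_toEmbedding, ← Multiset.map_nsmul, Equiv.neg_apply,
    card_sumsAtMost_map_neg] at this

theorem card_sumsAtMost_filter_pos_add_card_sumsAtMost_filter_neg_le (A : Finset ℤ) (r γ : ℕ) :
    (sumsAtMost (r • (A.filter (fun x ↦ 0 < x)).val) γ).card +
      (sumsAtMost (r • (A.filter (fun x ↦ x < 0)).val) γ).card ≤
      (sumsAtMost (r • A.val) γ).card + 1 := by
  set V := sumsAtMost (r • (A.filter (fun x ↦ 0 < x)).val) γ
  set W := sumsAtMost (r • (A.filter (fun x ↦ x < 0)).val) γ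
  have hVW : V ∩ W ⊆ {0} := fun x hx ↦ by
    obtain ⟨hxV, hxW⟩ := mem_inter.1 hx
    have h1 := nonneg_of_mem_sumsAtMost (fun y hy ↦
      (mem_filter.1 (Multiset.mem_of_mem_nsmul hy)).2.le) hxV
    have h2 := le_mul_of_mem_sumsAtMost le_rfl (fun y hy ↦
      (mem_filter.1 (Multiset.mem_of_mem_nsmul hy)).2.le) hxW
    rw [mul_zero] at h2
    exact mem_singleton.2 (le_antisymm h2 h1)
  have hsub (p : ℤ → Prop) [DecidablePred p] :
      sumsAtMost (r • (A.filter p).val) γ ⊆ sumsAtMost (r • A.val) γ :=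
    sumsAtMost_mono (nsmul_le_nsmul_right (Multiset.filter_le _ _) r) le_rfl
  calc V.card + W.card = (V ∪ W).card + (V ∩ W).card := (card_union_add_card_inter V W).symm
    _ ≤ _ := add_le_add (card_le_card (union_subset (hsub _) (hsub _)))
        ((card_le_card hVW).trans (card_singleton 0).le)

theorem two_mul_choose_two_succ (a : ℕ) : 2 * (a + 1).choose 2 = a * (a + 1) := by
  rw [Nat.choose_two_right, Nat.add_sub_cancel, mul_comm (a + 1)]
  exact Nat.mul_div_cancel' (Nat.even_mul_succ_self a).two_dvd

theorem choose_two_succ_eq (m : ℕ) : (((m + 1).choose 2 : ℕ) : ℤ) = m * (m + 1) / 2 := by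
  have h : (2 * (m + 1).choose 2 : ℤ) = m * (m + 1) := by
    exact_mod_cast two_mul_choose_two_succ m
  omega

theorem sq_succ_div_four_le_choose_add_choose {a b k : ℕ} (hk : a + b = k) :
    ((k : ℤ) + 1) ^ 2 / 4 ≤ ((a + 1).choose 2 + (b + 1).choose 2 : ℕ) := by
  have ha : (2 * (a + 1).choose 2 : ℤ) = a * (a + 1) := by
    exact_mod_cast two_mul_choose_two_succ a
  have hb : (2 * (b + 1).choose 2 : ℤ) = b * (b + 1) := by
    exact_mod_cast two_mul_choose_two_succ b
  have : ((k : ℤ) + 1) ^ 2 ≤ 4 * ((a + 1).choose 2 + (b + 1).choose 2 : ℕ) + 1 := by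
    rw [← hk]; push_cast
    nlinarith [sq_nonneg ((a : ℤ) - b)]
  omega

theorem sq_succ_div_four_sub_le {p n d m k : ℕ} (hpn : p + n = k) (hdm : d + m = k) :
    ((k : ℤ) + 1) ^ 2 / 4 - m * (m + 1) / 2 ≤
      ((min p d + 1).choose 2 + (min n d + 1).choose 2 : ℕ) := by
  rw [← choose_two_succ_eq]
  by_cases h : p ≤ d ∧ n ≤ d
  · rw [min_eq_left h.1, min_eq_left h.2]
    have := sq_succ_div_four_le_choose_add_choose hpn
    omega
  · have := sq_succ_div_four_le_choose_add_choose hdm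
    rcases not_and_or.1 h with h | h <;> rw [min_eq_right (le_of_not_ge h)] at * <;> omega

theorem card_filter_pos_add_card_filter_neg {A : Finset ℤ} (h0 : (0 : ℤ) ∉ A) :
    (A.filter (fun x ↦ 0 < x)).card + (A.filter (fun x ↦ x < 0)).card = A.card := by
  rw [← card_filter_add_card_filter_not (s := A) (fun x ↦ 0 < x)]
  congr 2
  refine filter_congr fun x hx ↦ ?_
  have : x ≠ 0 := fun h ↦ h0 (h ▸ hx)
  omega

theorem mul_choose_add_choose_add_one_le_card_sumsAtMost (A : Finset ℤ) {r d γ : ℕ}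
    (hγ : r * d ≤ γ) :
    r * ((min (A.filter (fun x ↦ 0 < x)).card d + 1).choose 2 +
        (min (A.filter (fun x ↦ x < 0)).card d + 1).choose 2) + 1 ≤
      (sumsAtMost (r • A.val) γ).card := by
  have hγ' (p : ℕ) : r * min p d ≤ γ := (Nat.mul_le_mul_left r (min_le_right p d)).trans hγ
  have hpos := mul_choose_add_one_le_card_sumsAtMost (s := A.filter fun x ↦ 0 < x)
    (fun x hx ↦ (mem_filter.1 hx).2) (min_le_left _ d) (hγ' _)
  have hneg := mul_choose_add_one_le_card_sumsAtMost_of_neg (s := A.filter fun x ↦ x < 0)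
    (fun x hx ↦ (mem_filter.1 hx).2) (min_le_left _ d) (hγ' _)
  have := card_sumsAtMost_filter_pos_add_card_sumsAtMost_filter_neg_le A r γ
  rw [mul_add]; omega

theorem stmt_18_general (k r α m : ℕ) (hmk : m ≤ k) (hmu : α < m * r)
    (A : Finset ℤ) (hcard : A.card = k) (h0 : (0 : ℤ) ∉ A) :
    ((sigmaSeqAtLeast A r α).card : ℤ) ≥
      (r : ℤ) * (((k : ℤ) + 1) ^ 2 / 4 - (m : ℤ) * ((m : ℤ) + 1) / 2) + 1 := by
  have hαm : α ≤ r * m := by rw [mul_comm]; exact hmu.le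
  have hγ : r * (k - m) ≤ r * k - α := by
    rw [Nat.mul_sub]; exact Nat.sub_le_sub_left hαm _
  have hcount := mul_choose_add_choose_add_one_le_card_sumsAtMost A hγ
  have hcompl := card_sumsAtMost_le_card_sigmaSeqAtLeast A
    (hcard ▸ hαm.trans (Nat.mul_le_mul_left r hmk))
  rw [hcard] at hcompl
  have harith := sq_succ_div_four_sub_le (card_filter_pos_add_card_filter_neg h0 ▸ hcard)
    (Nat.sub_add_cancel hmk)
  calc (r : ℤ) * (((k : ℤ) + 1) ^ 2 / 4 - (m : ℤ) * ((m : ℤ) + 1) / 2) + 1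
      ≤ r * ((min (A.filter (fun x ↦ 0 < x)).card (k - m) + 1).choose 2
          + (min (A.filter (fun x ↦ x < 0)).card (k - m) + 1).choose 2 : ℕ) + 1 := by gcongr
    _ ≤ (sigmaSeqAtLeast A r α).card := by exact_mod_cast hcount.trans hcompl

theorem stmt_18 (k r α m : ℕ) (hk : 3 ≤ k) (hr : 1 ≤ r)
    (hα : α ≤ r * k - 1) (hm1 : 1 ≤ m) (hmk : m ≤ k)
    (hml : (m - 1) * r ≤ α) (hmu : α < m * r)
    (A : Finset ℤ) (hcard : A.card = k) (h0 : (0 : ℤ) ∉ A) :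
    ((sigmaSeqAtLeast A r α).card : ℤ) ≥
      (r : ℤ) * (((k : ℤ) + 1) ^ 2 / 4 - (m : ℤ) * ((m : ℤ) + 1) / 2) + 1 :=
  stmt_18_general k r α m hmk hmu A hcard h0
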